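/- Let σ_x = !![0, 1; 1, 0] and σ_z = !![1, 0; 0, −1] be the Pauli matrices in Matrix (Fin 2) (Fin 2) ℂ. Then the maximum over unit vectors ψ ∈ ℂ² of |⟨ψ, σ_x ψ⟩| + |⟨ψ, σ_z ψ⟩| equals √2; that is, |⟨ψ, σ_x ψ⟩| + |⟨ψ, σ_z ψ⟩| ≤ √2 for every unit vector ψ, with equality for some unit vector ψ. (Consequently the corresponding pair of qubit-input channels satisfies ‖Φ₀ − Φ₁‖_NE = √2, while ‖Φ₀ − Φ₁‖_LOCC = 2.) -/

import Mathlib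

open Matrix Kronecker BigOperators ComplexOrder

noncomputable def posSemidefSqrtOld {n : Type*} [Fintype n] [DecidableEq n] {A : Matrix n n ℂ}
    (hA : A.PosSemidef) : Matrix n n ℂ :=
  hA.1.eigenvectorUnitary.1 * diagonal ((↑) ∘ Real.sqrt ∘ hA.1.eigenvalues) *
    (star hA.1.eigenvectorUnitary : Matrix n n ℂ)

noncomputable def traceNorm {n : Type*} [Fintype n] [DecidableEq n] (A : Matrix n n ℂ) : ℝ :=
  ((posSemidefSqrtOld (Matrix.posSemidef_conjTranspose_mul_self A)).trace).re

def IsDensity {n : Type*} [Fintype n] (ρ : Matrix n n ℂ) : Prop :=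
  ρ.PosSemidef ∧ ρ.trace = 1

def tensorId {X Y Z : Type*} (Φ : Matrix X X ℂ → Matrix Y Y ℂ)
    (ρ : Matrix (X × Z) (X × Z) ℂ) : Matrix (Y × Z) (Y × Z) ℂ :=
  Matrix.of fun p q => Φ (Matrix.of fun x x' => ρ (x, p.2) (x', q.2)) p.1 q.1

noncomputable def ChoiMatrix {X Y : Type*} [Fintype X] [DecidableEq X] [Fintype Y]
    (Φ : Matrix X X ℂ → Matrix Y Y ℂ) : Matrix (Y × X) (Y × X) ℂ :=
  ∑ j : X, ∑ k : X, (Φ (Matrix.single j k 1)) ⊗ₖ (Matrix.single j k 1)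

def IsChannel {X Y : Type*} [Fintype X] [DecidableEq X] [Fintype Y]
    (Φ : Matrix X X ℂ →ₗ[ℂ] Matrix Y Y ℂ) : Prop :=
  (∀ M, (Φ M).trace = M.trace) ∧ (ChoiMatrix (⇑Φ)).PosSemidef

def SeparableOp {Y Z : Type*} [Fintype Y] [Fintype Z]
    (P : Matrix (Y × Z) (Y × Z) ℂ) : Prop :=
  ∃ (N : ℕ) (Q : Fin N → Matrix Y Y ℂ) (R : Fin N → Matrix Z Z ℂ),
    (∀ i, (Q i).PosSemidef) ∧ (∀ i, (R i).PosSemidef) ∧ P = ∑ i, Q i ⊗ₖ R i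

def partialTranspose {Y Z : Type*} (M : Matrix (Y × Z) (Y × Z) ℂ) :
    Matrix (Y × Z) (Y × Z) ℂ :=
  Matrix.of fun p q => M (p.1, q.2) (q.1, p.2)

def IsPPT {Y Z : Type*} [Fintype Y] [Fintype Z] (M : Matrix (Y × Z) (Y × Z) ℂ) : Prop :=
  M.PosSemidef ∧ (partialTranspose M).PosSemidef

/-! Writing `ψ = (a, b)`, the expectations are `x = 2 Re (conj a * b)` and `z = |a|² - |b|²`, so
`x² + z² ≤ (|a|² + |b|²)² = 1` (the Bloch ball), and `|x| + |z| ≤ √(2 (x² + z²)) ≤ √2`.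
Equality holds at `ψ = (cos (π/8), sin (π/8))`, where `x = sin (π/4)` and `z = cos (π/4)`. -/

local notation "σX" => (!![0, 1; 1, 0] : Matrix (Fin 2) (Fin 2) ℂ)
local notation "σZ" => (!![1, 0; 0, -1] : Matrix (Fin 2) (Fin 2) ℂ)

lemma star_dotProduct_self_fin_two (ψ : Fin 2 → ℂ) :
    star ψ ⬝ᵥ ψ = ((‖ψ 0‖ ^ 2 + ‖ψ 1‖ ^ 2 : ℝ) : ℂ) := by
  simp [dotProduct, Fin.sum_univ_two, Complex.conj_mul']

lemma pauliX_expectation (ψ : Fin 2 → ℂ) :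
    star ψ ⬝ᵥ σX *ᵥ ψ = star (ψ 0) * ψ 1 + star (ψ 1) * ψ 0 := by
  simp [dotProduct, mulVec, Fin.sum_univ_two]

lemma pauliZ_expectation (ψ : Fin 2 → ℂ) :
    star ψ ⬝ᵥ σZ *ᵥ ψ = ((‖ψ 0‖ ^ 2 - ‖ψ 1‖ ^ 2 : ℝ) : ℂ) := by
  simp [dotProduct, mulVec, Fin.sum_univ_two, Complex.conj_mul']
  ring

lemma norm_pauliX_expectation_le (ψ : Fin 2 → ℂ) :
    ‖star ψ ⬝ᵥ σX *ᵥ ψ‖ ≤ 2 * ‖ψ 0‖ * ‖ψ 1‖ := by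
  rw [pauliX_expectation]
  refine (norm_add_le _ _).trans_eq ?_
  simp only [norm_mul, norm_star]
  ring

lemma norm_pauliZ_expectation (ψ : Fin 2 → ℂ) :
    ‖star ψ ⬝ᵥ σZ *ᵥ ψ‖ = |‖ψ 0‖ ^ 2 - ‖ψ 1‖ ^ 2| := by
  rw [pauliZ_expectation, Complex.norm_real, Real.norm_eq_abs]

lemma sq_norm_pauliX_expectation_add_sq_norm_pauliZ_expectation_le (ψ : Fin 2 → ℂ) :
    ‖star ψ ⬝ᵥ σX *ᵥ ψ‖ ^ 2 + ‖star ψ ⬝ᵥ σZ *ᵥ ψ‖ ^ 2 ≤ (‖ψ 0‖ ^ 2 + ‖ψ 1‖ ^ 2) ^ 2 := by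
  have hX := pow_le_pow_left₀ (norm_nonneg _) (norm_pauliX_expectation_le ψ) 2
  rw [norm_pauliZ_expectation, sq_abs]
  linarith

lemma norm_pauliX_expectation_add_norm_pauliZ_expectation_le (ψ : Fin 2 → ℂ) :
    ‖star ψ ⬝ᵥ σX *ᵥ ψ‖ + ‖star ψ ⬝ᵥ σZ *ᵥ ψ‖ ≤ √2 * (‖ψ 0‖ ^ 2 + ‖ψ 1‖ ^ 2) := by
  calc ‖star ψ ⬝ᵥ σX *ᵥ ψ‖ + ‖star ψ ⬝ᵥ σZ *ᵥ ψ‖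
      ≤ √(2 * (‖star ψ ⬝ᵥ σX *ᵥ ψ‖ ^ 2 + ‖star ψ ⬝ᵥ σZ *ᵥ ψ‖ ^ 2)) :=
        (le_abs_self _).trans (Real.abs_le_sqrt add_sq_le)
    _ ≤ √(2 * (‖ψ 0‖ ^ 2 + ‖ψ 1‖ ^ 2) ^ 2) := by
        gcongr
        exact sq_norm_pauliX_expectation_add_sq_norm_pauliZ_expectation_le ψ
    _ = √2 * (‖ψ 0‖ ^ 2 + ‖ψ 1‖ ^ 2) := by
        rw [Real.sqrt_mul zero_le_two, Real.sqrt_sq (by positivity)]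

section CosSin
variable (θ : ℝ)

lemma star_dotProduct_self_cos_sin :
    star ![(Real.cos θ : ℂ), Real.sin θ] ⬝ᵥ ![(Real.cos θ : ℂ), Real.sin θ] = 1 := by
  rw [star_dotProduct_self_fin_two]
  simp only [cons_val_zero, cons_val_one, Complex.norm_real, Real.norm_eq_abs, sq_abs,
    Real.cos_sq_add_sin_sq, Complex.ofReal_one]

lemma pauliX_expectation_cos_sin :
    star ![(Real.cos θ : ℂ), Real.sin θ] ⬝ᵥ σX *ᵥ ![(Real.cos θ : ℂ), Real.sin θ] =
      Real.sin (2 * θ) := by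
  simp only [pauliX_expectation, cons_val_zero, cons_val_one, Complex.star_def,
    Complex.conj_ofReal, Real.sin_two_mul]
  push_cast
  ring

lemma pauliZ_expectation_cos_sin :
    star ![(Real.cos θ : ℂ), Real.sin θ] ⬝ᵥ σZ *ᵥ ![(Real.cos θ : ℂ), Real.sin θ] =
      Real.cos (2 * θ) := by
  simp only [pauliZ_expectation, cons_val_zero, cons_val_one, Complex.norm_real,
    Real.norm_eq_abs, sq_abs, Real.cos_two_mul']

end CosSin

/-- `max_ψ |⟨ψ, σ_x ψ⟩| + |⟨ψ, σ_z ψ⟩| = √2` over unit vectors `ψ ∈ ℂ²`. -/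
theorem pauli_xz_expectation_max_sqrt_two :
    (∀ ψ : Fin 2 → ℂ, star ψ ⬝ᵥ ψ = 1 →
      ‖star ψ ⬝ᵥ (!![0, 1; 1, 0] : Matrix (Fin 2) (Fin 2) ℂ).mulVec ψ‖ +
        ‖star ψ ⬝ᵥ (!![1, 0; 0, -1] : Matrix (Fin 2) (Fin 2) ℂ).mulVec ψ‖
      ≤ Real.sqrt 2) ∧
    (∃ ψ : Fin 2 → ℂ, star ψ ⬝ᵥ ψ = 1 ∧
      ‖star ψ ⬝ᵥ (!![0, 1; 1, 0] : Matrix (Fin 2) (Fin 2) ℂ).mulVec ψ‖ +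
        ‖star ψ ⬝ᵥ (!![1, 0; 0, -1] : Matrix (Fin 2) (Fin 2) ℂ).mulVec ψ‖
      = Real.sqrt 2) := by
  refine ⟨fun ψ hψ => ?_,
    ![(Real.cos (Real.pi / 8) : ℂ), Real.sin (Real.pi / 8)], star_dotProduct_self_cos_sin _, ?_⟩
  · have hunit : ‖ψ 0‖ ^ 2 + ‖ψ 1‖ ^ 2 = 1 := by
      exact_mod_cast (star_dotProduct_self_fin_two ψ).symm.trans hψ
    simpa [hunit] using norm_pauliX_expectation_add_norm_pauliZ_expectation_le ψ
  · rw [pauliX_expectation_cos_sin, pauliZ_expectation_cos_sin,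
      show 2 * (Real.pi / 8) = Real.pi / 4 by ring, Real.sin_pi_div_four, Real.cos_pi_div_four,
      Complex.norm_real, Real.norm_of_nonneg (by positivity)]
    ring
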